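/- arXiv:2210.11107 — 2 statements merged into one kernel-verified Lean document; each statement's English description precedes it below -/
import Mathlib

section
/- Let S be a p×p real symmetric matrix with strictly positive diagonal entries S_{jj} > 0, and let λ_{jk} ≥ 0 for j ≠ k be penalty parameters satisfying λ_{jk} ≥ |S_{jk}| for all j ≠ k. Then the diagonal matrix Θ* with entries Θ*_{jj} = 1/S_{jj} maximizes the network graphical LASSO objective g(Θ) = log det(Θ) − tr(SΘ) − Σ_{j≠k} λ_{jk}|Θ_{jk}| over all p×p real symmetric positive definite matrices Θ. That is, for every symmetric positive definite Θ, g(Θ) ≤ g(Θ*). In particular, for large enough penalties all off-diagonal parameter estimates are set to zero. -/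
open Matrix

/-- The network graphical LASSO objective
`g(Θ) = log det Θ − tr(SΘ) − Σ_{j≠k} λ_{jk} |Θ_{jk}|`. -/
noncomputable def nglassoObj {p : ℕ} (S : Matrix (Fin p) (Fin p) ℝ)
    (lam : Fin p → Fin p → ℝ) (Θ : Matrix (Fin p) (Fin p) ℝ) : ℝ :=
  Real.log Θ.det - (S * Θ).trace -
    ∑ j : Fin p, ∑ k : Fin p, if j ≠ k then lam j k * |Θ j k| else 0

/-! For positive definite `Θ` and `d > 0`, the bound `log x ≤ x - 1` on the eigenvalues of
`D^{1/2} Θ D^{1/2}` (`D = diagonal d`) gives `log det Θ + Σ log d_j ≤ Σ d_j Θ_jj - p`.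
When `λ_{jk} ≥ |S_{jk}|` the penalty absorbs the off-diagonal part of `tr(SΘ)`, so
`g(Θ) ≤ log det Θ - Σ S_jj Θ_jj`, and taking `d_j = S_jj` bounds this by
`-Σ log S_jj - p = g(Θ*)`. -/

namespace Matrix.PosDef

variable {n : Type*} [Fintype n] [DecidableEq n]

theorem log_det_le_trace_sub_card {A : Matrix n n ℝ} (hA : A.PosDef) :
    Real.log A.det ≤ A.trace - Fintype.card n := by
  have hμ := hA.eigenvalues_pos
  have hdet : A.det = ∏ i, hA.1.eigenvalues i := by simpa using hA.1.det_eq_prod_eigenvalues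
  have htr : A.trace = ∑ i, hA.1.eigenvalues i := by simpa using hA.1.trace_eq_sum_eigenvalues
  rw [hdet, htr, Real.log_prod fun i _ => (hμ i).ne']
  calc ∑ i, Real.log (hA.1.eigenvalues i) ≤ ∑ i, (hA.1.eigenvalues i - 1) :=
        Finset.sum_le_sum fun i _ => Real.log_le_sub_one_of_pos (hμ i)
    _ = _ := by simp [Finset.sum_sub_distrib]

theorem log_det_add_sum_log_le {Θ : Matrix n n ℝ} (hΘ : Θ.PosDef) {d : n → ℝ}
    (hd : ∀ j, 0 < d j) :
    Real.log Θ.det + ∑ j, Real.log (d j) ≤ ∑ j, d j * Θ j j - Fintype.card n := by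
  set r : n → ℝ := fun j => √(d j)
  have hrr : ∀ j, r j * r j = d j := fun j => Real.mul_self_sqrt (hd j).le
  have hA : (diagonal r * Θ * diagonal r).PosDef := by
    have hU : IsUnit (diagonal r) :=
      isUnit_diagonal.mpr (Pi.isUnit_iff.mpr fun j => (Real.sqrt_pos.mpr (hd j)).ne'.isUnit)
    simpa [star_eq_conjTranspose] using (IsUnit.posDef_star_left_conjugate_iff hU).mpr hΘ
  have hdet : (diagonal r * Θ * diagonal r).det = (∏ j, d j) * Θ.det := by
    rw [det_mul, det_mul, det_diagonal, mul_right_comm, ← Finset.prod_mul_distrib]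
    simp only [hrr]
  have htr : (diagonal r * Θ * diagonal r).trace = ∑ j, d j * Θ j j := by
    rw [trace_mul_cycle, diagonal_mul_diagonal]
    simp [trace, diagonal_mul, hrr]
  have h := hA.log_det_le_trace_sub_card
  rw [hdet, htr, Real.log_mul (Finset.prod_pos fun j _ => hd j).ne' hΘ.det_pos.ne',
    Real.log_prod fun j _ => (hd j).ne'] at h
  linarith

end Matrix.PosDef

theorem sum_diag_mul_diag_le_trace_mul_add_penalty {n : Type*} [Fintype n] [DecidableEq n]
    {S Θ : Matrix n n ℝ} (hΘ : Θ.IsSymm) {lam : n → n → ℝ}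
    (hlam : ∀ j k, j ≠ k → |S j k| ≤ lam j k) :
    ∑ j, S j j * Θ j j ≤
      (S * Θ).trace + ∑ j, ∑ k, if j ≠ k then lam j k * |Θ j k| else 0 := by
  have htr : (S * Θ).trace = ∑ j, ∑ k, S j k * Θ j k := by
    simp only [trace, diag, mul_apply]
    congr! 3 with j _ k _
    exact hΘ.apply j k
  rw [htr, ← Finset.sum_add_distrib]
  refine Finset.sum_le_sum fun j _ => ?_
  have hdiag : S j j * Θ j j = ∑ k, if j = k then S j k * Θ j k else 0 := by simp
  rw [← Finset.sum_add_distrib, hdiag]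
  refine Finset.sum_le_sum fun k _ => ?_
  by_cases hjk : j = k
  · simp [hjk]
  rw [if_neg hjk, if_pos hjk]
  have : |S j k * Θ j k| ≤ lam j k * |Θ j k| := by
    rw [abs_mul]
    exact mul_le_mul_of_nonneg_right (hlam j k hjk) (abs_nonneg _)
  linarith [neg_abs_le (S j k * Θ j k)]

theorem nglassoObj_diagonal_inv_diag {p : ℕ} {S : Matrix (Fin p) (Fin p) ℝ}
    (hS : ∀ j, 0 < S j j) (lam : Fin p → Fin p → ℝ) :
    nglassoObj S lam (diagonal fun j => 1 / S j j) = -∑ j, Real.log (S j j) - p := by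
  have hlog : Real.log (diagonal fun j => 1 / S j j).det = -∑ j, Real.log (S j j) := by
    rw [det_diagonal, Real.log_prod fun j _ => one_div_ne_zero (hS j).ne']
    simp [Real.log_inv]
  have htr : (S * diagonal fun j => 1 / S j j).trace = p := by
    simp [trace, mul_diagonal, (hS _).ne']
  have hpen : ∑ j, ∑ k, (if j ≠ k then lam j k * |(diagonal fun i => 1 / S i i) j k| else 0)
      = 0 :=
    Finset.sum_eq_zero fun j _ => Finset.sum_eq_zero fun k _ => by
      by_cases hjk : j = k <;> simp [hjk]
  rw [nglassoObj, hlog, htr, hpen, sub_zero]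

theorem diagonal_maximizes_nglasso_of_large_penalty_general {p : ℕ}
    (S : Matrix (Fin p) (Fin p) ℝ) (hSdiag : ∀ j, 0 < S j j)
    (lam : Fin p → Fin p → ℝ)
    (hlam : ∀ j k, j ≠ k → |S j k| ≤ lam j k) :
    ∀ Θ : Matrix (Fin p) (Fin p) ℝ, Θ.IsSymm → Θ.PosDef →
      nglassoObj S lam Θ ≤ nglassoObj S lam (Matrix.diagonal fun j => 1 / S j j) := by
  intro Θ hΘs hΘ
  have hlogdet := hΘ.log_det_add_sum_log_le hSdiag
  have hpenalty := sum_diag_mul_diag_le_trace_mul_add_penalty hΘs hlam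
  rw [Fintype.card_fin] at hlogdet
  rw [nglassoObj_diagonal_inv_diag hSdiag, nglassoObj]
  linarith

/-- If all penalties satisfy `λ_{jk} ≥ |S_{jk}|`, then the diagonal matrix with entries
`1/S_{jj}` maximizes the network graphical LASSO objective over symmetric positive
definite matrices. -/
theorem diagonal_maximizes_nglasso_of_large_penalty {p : ℕ}
    (S : Matrix (Fin p) (Fin p) ℝ) (hS : S.IsSymm) (hSdiag : ∀ j, 0 < S j j)
    (lam : Fin p → Fin p → ℝ) (hlam0 : ∀ j k, j ≠ k → 0 ≤ lam j k)
    (hlam : ∀ j k, j ≠ k → |S j k| ≤ lam j k) :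
    ∀ Θ : Matrix (Fin p) (Fin p) ℝ, Θ.IsSymm → Θ.PosDef →
      nglassoObj S lam Θ ≤ nglassoObj S lam (Matrix.diagonal fun j => 1 / S j j) :=
  diagonal_maximizes_nglasso_of_large_penalty_general S hSdiag lam hlam
end

section
/- Let R be a p×p real symmetric positive definite matrix with unit diagonal entries R_{jj} = 1 (a correlation matrix), and let λ ≥ max_{j≠k} |R_{jk}| be a constant penalty. Then the p×p identity matrix maximizes the objective g(Θ) = log det(Θ) − tr(RΘ) − λ Σ_{j≠k} |Θ_{jk}| over all p×p real symmetric positive definite matrices Θ. Consequently, when all variables are standardised to unit sample variance, the optimal graphical LASSO intercept hyperparameter β₀ (with penalty λ = exp(β₀)) admitting a non-diagonal solution satisfies exp(β₀) ≤ max_{j≠k} |R_{jk}|. -/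
/-!
Diagonalising `Θ`, the concavity bound `log x ≤ x - 1` on its eigenvalues gives
`log det Θ ≤ tr Θ - p`. Since `R` has unit diagonal, `tr(RΘ) + λ Σ_{j≠k} |Θ_{jk}| - tr Θ` is a sum of
off-diagonal terms `Θ_{jk} R_{kj} + λ |Θ_{jk}|`, each nonnegative once `|R_{kj}| ≤ λ`.
Hence `g(Θ) ≤ -p = g(1)`, strictly if `λ` exceeds every `|R_{jk}|` and `Θ` is not diagonal.
-/

open Matrix

/-- The graphical LASSO objective with a constant penalty `λ`:
`g(Θ) = log det Θ − tr(RΘ) − λ Σ_{j≠k} |Θ_{jk}|`. -/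
noncomputable def glassoObjConst {p : ℕ} (R : Matrix (Fin p) (Fin p) ℝ)
    (lam : ℝ) (Θ : Matrix (Fin p) (Fin p) ℝ) : ℝ :=
  Real.log Θ.det - (R * Θ).trace -
    lam * ∑ j : Fin p, ∑ k : Fin p, if j ≠ k then |Θ j k| else 0

theorem mul_add_mul_abs_nonneg (a : ℝ) {b lam : ℝ} (hb : |b| ≤ lam) : 0 ≤ a * b + lam * |a| := by
  have := neg_abs_le (a * b)
  rw [abs_mul] at this
  nlinarith [abs_nonneg a]

theorem mul_add_mul_abs_pos {a b lam : ℝ} (ha : a ≠ 0) (hb : |b| < lam) : 0 < a * b + lam * |a| := by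
  have := neg_abs_le (a * b)
  rw [abs_mul] at this
  nlinarith [abs_pos.mpr ha]

namespace Matrix

variable {n : Type*} [Fintype n] [DecidableEq n]

def offDiagL1 (Θ : Matrix n n ℝ) : ℝ :=
  ∑ j, ∑ k, if j ≠ k then |Θ j k| else 0

theorem offDiagL1_one : offDiagL1 (1 : Matrix n n ℝ) = 0 :=
  Finset.sum_eq_zero fun j _ => Finset.sum_eq_zero fun k _ => by
    by_cases h : j = k <;> simp [h, one_apply_ne]

theorem PosDef.log_det_le_trace_sub_card_s2 {A : Matrix n n ℝ} (hA : A.PosDef) :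
    Real.log A.det ≤ A.trace - Fintype.card n := by
  have hpos := hA.eigenvalues_pos
  rw [hA.isHermitian.det_eq_prod_eigenvalues, hA.isHermitian.trace_eq_sum_eigenvalues]
  simp only [RCLike.ofReal_real_eq_id, id]
  rw [Real.log_prod fun i _ => (hpos i).ne', ← Finset.card_univ, ← nsmul_one,
    ← Finset.sum_const, ← Finset.sum_sub_distrib]
  exact Finset.sum_le_sum fun i _ => Real.log_le_sub_one_of_pos (hpos i)

theorem trace_mul_add_offDiagL1_sub_trace {R : Matrix n n ℝ} (hdiag : ∀ j, R j j = 1)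
    (lam : ℝ) (Θ : Matrix n n ℝ) :
    (R * Θ).trace + lam * offDiagL1 Θ - Θ.trace =
      ∑ j, ∑ k, if j ≠ k then Θ j k * R k j + lam * |Θ j k| else 0 := by
  rw [trace_mul_comm]
  simp only [offDiagL1, trace, diag, mul_apply, Finset.mul_sum]
  rw [← Finset.sum_add_distrib, ← Finset.sum_sub_distrib]
  refine Finset.sum_congr rfl fun j _ => ?_
  have hdiag_term : Θ j j = ∑ k, if j = k then Θ j k else 0 := by simp
  rw [hdiag_term, ← Finset.sum_add_distrib, ← Finset.sum_sub_distrib]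
  refine Finset.sum_congr rfl fun k _ => ?_
  by_cases h : j = k
  · subst h; simp [hdiag]
  · simp [h]

theorem trace_le_trace_mul_add_offDiagL1 {R : Matrix n n ℝ} (hdiag : ∀ j, R j j = 1) {lam : ℝ}
    (hle : ∀ j k, j ≠ k → |R j k| ≤ lam) (Θ : Matrix n n ℝ) :
    Θ.trace ≤ (R * Θ).trace + lam * offDiagL1 Θ := by
  rw [← sub_nonneg, trace_mul_add_offDiagL1_sub_trace hdiag]
  refine Finset.sum_nonneg fun j _ => Finset.sum_nonneg fun k _ => ?_
  split_ifs with h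
  · exact mul_add_mul_abs_nonneg (Θ j k) (hle k j (Ne.symm h))
  · exact le_rfl

theorem trace_lt_trace_mul_add_offDiagL1 {R : Matrix n n ℝ} (hdiag : ∀ j, R j j = 1) {lam : ℝ}
    (hlt : ∀ j k, j ≠ k → |R j k| < lam) {Θ : Matrix n n ℝ} {j₀ k₀ : n} (hjk : j₀ ≠ k₀)
    (hΘ : Θ j₀ k₀ ≠ 0) :
    Θ.trace < (R * Θ).trace + lam * offDiagL1 Θ := by
  rw [← sub_pos, trace_mul_add_offDiagL1_sub_trace hdiag]
  have hterm (j k : n) : 0 ≤ if j ≠ k then Θ j k * R k j + lam * |Θ j k| else 0 := by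
    split_ifs with h
    · exact mul_add_mul_abs_nonneg (Θ j k) (hlt k j (Ne.symm h)).le
    · exact le_rfl
  have hpos : 0 < if j₀ ≠ k₀ then Θ j₀ k₀ * R k₀ j₀ + lam * |Θ j₀ k₀| else 0 := by
    rw [if_pos hjk]
    exact mul_add_mul_abs_pos hΘ (hlt k₀ j₀ hjk.symm)
  exact Finset.sum_pos' (fun j _ => Finset.sum_nonneg fun k _ => hterm j k)
    ⟨j₀, Finset.mem_univ _, Finset.sum_pos' (fun k _ => hterm j₀ k) ⟨k₀, Finset.mem_univ _, hpos⟩⟩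

end Matrix

theorem glassoObjConst_eq {p : ℕ} (R : Matrix (Fin p) (Fin p) ℝ) (lam : ℝ)
    (Θ : Matrix (Fin p) (Fin p) ℝ) :
    glassoObjConst R lam Θ = Real.log Θ.det - (R * Θ).trace - lam * offDiagL1 Θ :=
  rfl

theorem glassoObjConst_one {p : ℕ} {R : Matrix (Fin p) (Fin p) ℝ} (hdiag : ∀ j, R j j = 1)
    (lam : ℝ) : glassoObjConst R lam 1 = -p := by
  simp [glassoObjConst_eq, offDiagL1_one, trace, hdiag]

theorem glassoObjConst_le_one_sub {p : ℕ} {R : Matrix (Fin p) (Fin p) ℝ}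
    (hdiag : ∀ j, R j j = 1) (lam : ℝ) {Θ : Matrix (Fin p) (Fin p) ℝ} (hΘ : Θ.PosDef) :
    glassoObjConst R lam Θ ≤
      glassoObjConst R lam 1 - ((R * Θ).trace + lam * offDiagL1 Θ - Θ.trace) := by
  have hlogdet := hΘ.log_det_le_trace_sub_card_s2
  rw [Fintype.card_fin] at hlogdet
  rw [glassoObjConst_one hdiag, glassoObjConst_eq]
  linarith

theorem identity_maximizes_glasso_of_large_penalty_general {p : ℕ}
    (R : Matrix (Fin p) (Fin p) ℝ)
    (hRdiag : ∀ j, R j j = 1) :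
    (∀ lam : ℝ, (∀ j k, j ≠ k → |R j k| ≤ lam) →
      ∀ Θ : Matrix (Fin p) (Fin p) ℝ, Θ.IsSymm → Θ.PosDef →
        glassoObjConst R lam Θ ≤ glassoObjConst R lam (1 : Matrix (Fin p) (Fin p) ℝ)) ∧
    (∀ β₀ : ℝ,
      (∃ Θ : Matrix (Fin p) (Fin p) ℝ, Θ.IsSymm ∧ Θ.PosDef ∧
        (∃ j k, j ≠ k ∧ Θ j k ≠ 0) ∧
        (∀ Θ' : Matrix (Fin p) (Fin p) ℝ, Θ'.IsSymm → Θ'.PosDef →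
          glassoObjConst R (Real.exp β₀) Θ' ≤ glassoObjConst R (Real.exp β₀) Θ)) →
      ∃ j k, j ≠ k ∧ Real.exp β₀ ≤ |R j k|) := by
  constructor
  · intro lam hle Θ _ hΘ
    have hgap := trace_le_trace_mul_add_offDiagL1 hRdiag hle Θ
    have hbound := glassoObjConst_le_one_sub hRdiag lam hΘ
    linarith
  · rintro β₀ ⟨Θ, -, hΘ, ⟨j₀, k₀, hjk, hΘjk⟩, hmax⟩
    by_contra! hsmall
    have hgap := trace_lt_trace_mul_add_offDiagL1 hRdiag hsmall hjk hΘjk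
    have hbound := glassoObjConst_le_one_sub hRdiag (Real.exp β₀) hΘ
    have hopt := hmax 1 isSymm_one PosDef.one
    linarith

/-- For a correlation matrix `R` (symmetric positive definite with unit diagonal) and a
constant penalty `λ ≥ max_{j≠k} |R_{jk}|`, the identity matrix maximizes the graphical
LASSO objective over symmetric positive definite matrices. Consequently, any intercept
hyperparameter `β₀` whose penalty `exp β₀` admits a non-diagonal maximizer satisfies
`exp β₀ ≤ |R_{jk}|` for some `j ≠ k`, i.e. `exp β₀ ≤ max_{j≠k} |R_{jk}|`. -/
theorem identity_maximizes_glasso_of_large_penalty {p : ℕ}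
    (R : Matrix (Fin p) (Fin p) ℝ) (hR : R.IsSymm) (hRpd : R.PosDef)
    (hRdiag : ∀ j, R j j = 1) :
    (∀ lam : ℝ, (∀ j k, j ≠ k → |R j k| ≤ lam) →
      ∀ Θ : Matrix (Fin p) (Fin p) ℝ, Θ.IsSymm → Θ.PosDef →
        glassoObjConst R lam Θ ≤ glassoObjConst R lam (1 : Matrix (Fin p) (Fin p) ℝ)) ∧
    (∀ β₀ : ℝ,
      (∃ Θ : Matrix (Fin p) (Fin p) ℝ, Θ.IsSymm ∧ Θ.PosDef ∧
        (∃ j k, j ≠ k ∧ Θ j k ≠ 0) ∧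
        (∀ Θ' : Matrix (Fin p) (Fin p) ℝ, Θ'.IsSymm → Θ'.PosDef →
          glassoObjConst R (Real.exp β₀) Θ' ≤ glassoObjConst R (Real.exp β₀) Θ)) →
      ∃ j k, j ≠ k ∧ Real.exp β₀ ≤ |R j k|) :=
  identity_maximizes_glasso_of_large_penalty_general R hRdiag
end
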